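/- arXiv:math/0609115 — 2 statements merged into one kernel-verified Lean document; each statement's English description precedes it below -/
import Mathlib

section
/- Let F be a field with a valuation v : F → Γ₀ into a linearly ordered commutative group with zero, and let π ∈ F satisfy v(π) > 1. Let g ∈ SL₂(F) have entries g = [[x, y], [z, w]] (so xw − yz = 1). Then g lies in the double coset I · D' · I, where D' = [[π⁻¹, 0], [0, π]] and I is the Iwahori subgroup, if and only if v(x) < v(π), v(y) ≤ v(π), v(z) < v(π), and v(w) = v(π). -/
/-!
Write `D = diag(π⁻¹, π)`. For Iwahori matrices `i₁ = [[a, b], [c, d]]` and `i₂ = [[e, f], [k, h]]`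
every entry of `i₁ D i₂` has the form `s π⁻¹ t + s' π t'`. The first summand has valuation
below `1 < v π`; the second has valuation at most `v π`, and strictly less when `t' = k`.
In `w = c π⁻¹ f + d π h` the determinant condition forces `v d = v h = 1`, so `v w = v π`.
Conversely, if `v w = v π` then `g = [[π/w, y/π], [0, w/π]] · D · [[1, 0], [z/w, 1]]`,
both outer factors being Iwahori.
-/

/-- Membership in the Iwahori subgroup of `SL₂` of a valued field: a matrix of determinant `1`,
entries of valuation at most `1`, and lower-left entry of valuation strictly less than `1`
(i.e. a matrix over the valuation ring whose residue is upper triangular). -/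
def IwahoriMem {F Γ₀ : Type*} [Field F] [LinearOrderedCommGroupWithZero Γ₀]
    (v : Valuation F Γ₀) (m : Matrix (Fin 2) (Fin 2) F) : Prop :=
  m.det = 1 ∧ v (m 0 0) ≤ 1 ∧ v (m 0 1) ≤ 1 ∧ v (m 1 0) < 1 ∧ v (m 1 1) ≤ 1

namespace Valuation

variable {R Γ₀ : Type*} [Ring R] [LinearOrderedCommGroupWithZero Γ₀] (v : Valuation R Γ₀)
  {s t : R}

theorem map_mul_mul_le (u : R) (hs : v s ≤ 1) (ht : v t ≤ 1) : v (s * u * t) ≤ v u := by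
  rw [map_mul, map_mul]
  calc v s * v u * v t ≤ 1 * v u * 1 := by gcongr
    _ = v u := by rw [one_mul, mul_one]

theorem map_mul_mul_lt {u : R} (hu : v u ≠ 0) (hs : v s ≤ 1) (ht : v t < 1) :
    v (s * u * t) < v u := by
  rw [map_mul, map_mul]
  calc v s * v u * v t ≤ v u * v t := by gcongr; exact mul_le_of_le_one_left zero_le hs
    _ < v u := mul_lt_of_lt_one_right (zero_lt_iff.mpr hu) ht

end Valuation

theorem Matrix.mul_fin_two_diag_mul_apply {R : Type*} [Semiring R]
    (A B : Matrix (Fin 2) (Fin 2) R) (s t : R) (i j : Fin 2) :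
    (A * !![s, 0; 0, t] * B) i j = A i 0 * s * B 0 j + A i 1 * t * B 1 j := by
  simp [Matrix.mul_apply, Fin.sum_univ_two]

theorem Matrix.fin_two_eq_upper_mul_diag_mul_lower {F : Type*} [Field F] {x y z w π : F}
    (hdet : x * w - y * z = 1) (hπ : π ≠ 0) (hw : w ≠ 0) :
    !![x, y; z, w] = !![π / w, y / π; 0, (π / w)⁻¹] * !![π⁻¹, 0; 0, π] * !![1, 0; z / w, 1] := by
  ext i j
  fin_cases i <;> fin_cases j <;> simp <;> field_simp
  linear_combination hdet

section

variable {F Γ₀ : Type*} [Field F] [LinearOrderedCommGroupWithZero Γ₀] {v : Valuation F Γ₀}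

theorem IwahoriMem.valuation_diag_eq_one {m : Matrix (Fin 2) (Fin 2) F} (hm : IwahoriMem v m) :
    v (m 0 0) = 1 ∧ v (m 1 1) = 1 := by
  obtain ⟨hdet, h00, h01, h10, h11⟩ := hm
  have hprod : v (m 0 0 * m 1 1) = 1 := by
    rw [Matrix.det_fin_two] at hdet
    rw [show m 0 0 * m 1 1 = 1 + m 0 1 * m 1 0 by linear_combination hdet]
    exact v.map_one_add_of_lt (by
      rw [map_mul]; exact mul_lt_one_of_nonneg_of_lt_one_right h01 zero_le h10)
  rw [map_mul] at hprod
  exact ⟨eq_one_of_one_le_mul_left h00 h11 hprod.ge, eq_one_of_one_le_mul_right h00 h11 hprod.ge⟩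

theorem iwahoriMem_upper_triangular {u b : F} (hu : v u = 1) (hb : v b ≤ 1) :
    IwahoriMem v !![u, b; 0, u⁻¹] := by
  have hu0 : u ≠ 0 := by rintro rfl; simp at hu
  exact ⟨by simp [Matrix.det_fin_two, hu0], by simp [hu], by simpa using hb, by simp, by simp [hu]⟩

theorem iwahoriMem_lower_unipotent {c : F} (hc : v c < 1) : IwahoriMem v !![1, 0; c, 1] :=
  ⟨by simp [Matrix.det_fin_two], by simp, by simp, by simpa using hc, by simp⟩

theorem valuation_apply_of_eq_iwahori_mul_diag_inv_mul {π : F} (hπ : 1 < v π)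
    {g i₁ i₂ : Matrix (Fin 2) (Fin 2) F} (h₁ : IwahoriMem v i₁) (h₂ : IwahoriMem v i₂)
    (hg : g = i₁ * !![π⁻¹, 0; 0, π] * i₂) :
    v (g 0 0) < v π ∧ v (g 0 1) ≤ v π ∧ v (g 1 0) < v π ∧ v (g 1 1) = v π := by
  have hπ0 : v π ≠ 0 := (zero_lt_one.trans hπ).ne'
  have hunit₁ := h₁.valuation_diag_eq_one
  have hunit₂ := h₂.valuation_diag_eq_one
  obtain ⟨-, ha, hb, hc, hd⟩ := h₁
  obtain ⟨-, he, hf, hk, hh⟩ := h₂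
  have hsmall {s t : F} (hs : v s ≤ 1) (ht : v t ≤ 1) : v (s * π⁻¹ * t) < v π :=
    (v.map_mul_mul_le π⁻¹ hs ht).trans_lt <| by
      rw [map_inv₀]; exact (inv_lt_one_of_one_lt₀ hπ).trans hπ
  have hcorner : v (i₁ 1 1 * π * i₂ 1 1) = v π := by
    simp only [map_mul, hunit₁.2, hunit₂.2, one_mul, mul_one]
  subst hg
  simp only [Matrix.mul_fin_two_diag_mul_apply]
  refine ⟨v.map_add_lt (hsmall ha he) (v.map_mul_mul_lt hπ0 hb hk),
    v.map_add_le (hsmall ha hf).le (v.map_mul_mul_le π hb hh),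
    v.map_add_lt (hsmall hc.le he) (v.map_mul_mul_lt hπ0 hd hk), ?_⟩
  rw [v.map_add_eq_of_lt_right (hcorner ▸ hsmall hc.le hf), hcorner]

end

/-- Let `g = [[x, y], [z, w]] ∈ SL₂(F)` and `v(π) > 1`.  Then `g ∈ I · [[π⁻¹, 0], [0, π]] · I`
iff `v(x) < v(π)`, `v(y) ≤ v(π)`, `v(z) < v(π)` and `v(w) = v(π)`. -/
theorem mem_iwahori_double_coset_diag_inv_iff
    {F Γ₀ : Type*} [Field F] [LinearOrderedCommGroupWithZero Γ₀]
    (v : Valuation F Γ₀) (π : F) (hπ : 1 < v π)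
    (x y z w : F) (hdet : x * w - y * z = 1) :
    (∃ i₁ i₂ : Matrix (Fin 2) (Fin 2) F, IwahoriMem v i₁ ∧ IwahoriMem v i₂ ∧
        !![x, y; z, w] = i₁ * !![π⁻¹, 0; 0, π] * i₂) ↔
      v x < v π ∧ v y ≤ v π ∧ v z < v π ∧ v w = v π := by
  have hπ0 : 0 < v π := zero_lt_one.trans hπ
  constructor
  · rintro ⟨i₁, i₂, h₁, h₂, hg⟩
    simpa using valuation_apply_of_eq_iwahori_mul_diag_inv_mul hπ h₁ h₂ hg
  · rintro ⟨-, hy, hz, hw⟩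
    have hw0 : w ≠ 0 := by rintro rfl; simp [hπ0.ne] at hw
    have hu : v (π / w) = 1 := by rw [map_div₀, hw, div_self hπ0.ne']
    refine ⟨_, _, iwahoriMem_upper_triangular hu ?_, iwahoriMem_lower_unipotent ?_,
      Matrix.fin_two_eq_upper_mul_diag_mul_lower hdet (v.ne_zero_iff.mp hπ0.ne') hw0⟩
    · rw [map_div₀]; exact div_le_one_of_le₀ hy zero_le
    · rw [map_div₀, hw]; exact (div_lt_one₀ hπ0).mpr hz
end

section
/- Let F be a field with a valuation v : F → Γ₀ into a linearly ordered commutative group with zero, and let π ∈ F satisfy v(π) > 1. Let g ∈ SL₂(F) have entries g = [[x, y], [z, w]] (so xw − yz = 1). Then g lies in the double coset I · W · I, where W = [[0, π], [−π⁻¹, 0]] (the determinant-1 antidiagonal representative) and I is the Iwahori subgroup, if and only if v(x) < v(π), v(y) = v(π), v(z) < v(π), and v(w) < v(π). -/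
section

variable {F Γ₀ : Type*} [Field F] [LinearOrderedCommGroupWithZero Γ₀] {v : Valuation F Γ₀}

namespace IwahoriMem

variable {m : Matrix (Fin 2) (Fin 2) F}

theorem val_le_one (h : IwahoriMem v m) (i j : Fin 2) : v (m i j) ≤ 1 := by
  obtain ⟨-, h00, h01, h10, h11⟩ := h
  fin_cases i <;> fin_cases j
  exacts [h00, h01, h10.le, h11]

theorem val_one_zero_lt_one (h : IwahoriMem v m) : v (m 1 0) < 1 := h.2.2.2.1

theorem val_diag_mul_eq_one (h : IwahoriMem v m) : v (m 0 0) * v (m 1 1) = 1 := by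
  have hdet : m 0 0 * m 1 1 = 1 + m 0 1 * m 1 0 := by
    linear_combination (Matrix.det_fin_two m).symm.trans h.1
  have hsmall : v (m 0 1 * m 1 0) < v 1 := by
    rw [v.map_mul, v.map_one]
    exact Right.mul_lt_one_of_le_of_lt (h.val_le_one 0 1) h.val_one_zero_lt_one
  rw [← v.map_mul, hdet, v.map_add_eq_of_lt_left hsmall, v.map_one]

theorem val_zero_zero_eq_one (h : IwahoriMem v m) : v (m 0 0) = 1 :=
  le_antisymm (h.val_le_one 0 0)
    (h.val_diag_mul_eq_one ▸ mul_le_of_le_one_right' (h.val_le_one 1 1))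

theorem val_one_one_eq_one (h : IwahoriMem v m) : v (m 1 1) = 1 :=
  le_antisymm (h.val_le_one 1 1)
    (h.val_diag_mul_eq_one ▸ mul_le_of_le_one_left' (h.val_le_one 0 0))

end IwahoriMem

theorem iwahoriMem_lowerTriangular {a c d : F} (had : a * d = 1) (ha : v a ≤ 1) (hc : v c < 1)
    (hd : v d ≤ 1) : IwahoriMem v !![a, 0; c, d] := by
  refine ⟨?_, ha, ?_, hc, hd⟩
  · simpa [Matrix.det_fin_two_of] using had
  · simp

theorem mul_antidiag_mul_apply (π : F) (A B : Matrix (Fin 2) (Fin 2) F) (i j : Fin 2) :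
    (A * !![0, π; -π⁻¹, 0] * B) i j = A i 0 * π * B 1 j - A i 1 * π⁻¹ * B 0 j := by
  simp only [Matrix.mul_apply, Fin.sum_univ_two, Matrix.of_apply, Matrix.cons_val',
    Matrix.cons_val_zero, Matrix.cons_val_one, Matrix.empty_val', Matrix.cons_val_fin_one]
  ring

variable {π : F}

theorem val_mul_inv_mul_lt_one (hπ : 1 < v π) {u u' : F} (hu : v u ≤ 1) (hu' : v u' ≤ 1) :
    v (u * π⁻¹ * u') < 1 := by
  rw [v.map_mul, v.map_mul, map_inv₀]
  calc v u * (v π)⁻¹ * v u' ≤ 1 * (v π)⁻¹ * 1 := by gcongr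
    _ < 1 := by simpa using inv_lt_one_of_one_lt₀ hπ

theorem val_mul_mul_sub_lt (hπ : 1 < v π) {s t r : F} (hst : v s * v t < 1) (hr : v r < 1) :
    v (s * π * t - r) < v π := by
  have hπ0 : 0 < v π := zero_lt_one.trans hπ
  have hmain : v (s * π * t) < v π := by
    calc v (s * π * t) = v s * v t * v π := by simp only [v.map_mul, mul_right_comm]
      _ < 1 * v π := mul_lt_mul_of_pos_right hst hπ0
      _ = v π := one_mul _
  exact (v.map_sub _ _).trans_lt (max_lt hmain (hr.trans hπ))

theorem val_mul_mul_sub_eq (hπ : 1 < v π) {s t r : F} (hs : v s = 1) (ht : v t = 1)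
    (hr : v r < 1) : v (s * π * t - r) = v π := by
  have hmain : v (s * π * t) = v π := by simp [v.map_mul, hs, ht]
  rw [v.map_sub_eq_of_lt_left (hmain ▸ hr.trans hπ), hmain]

theorem val_mul_antidiag_mul (hπ : 1 < v π) {A B : Matrix (Fin 2) (Fin 2) F}
    (hA : IwahoriMem v A) (hB : IwahoriMem v B) :
    let M := A * !![0, π; -π⁻¹, 0] * B
    v (M 0 0) < v π ∧ v (M 0 1) = v π ∧ v (M 1 0) < v π ∧ v (M 1 1) < v π := by
  have small (i j : Fin 2) : v (A i 1 * π⁻¹ * B 0 j) < 1 :=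
    val_mul_inv_mul_lt_one hπ (hA.val_le_one i 1) (hB.val_le_one 0 j)
  simp only [mul_antidiag_mul_apply]
  refine ⟨?_, ?_, ?_, ?_⟩
  · exact val_mul_mul_sub_lt hπ
      (Right.mul_lt_one_of_le_of_lt (hA.val_le_one 0 0) hB.val_one_zero_lt_one) (small 0 0)
  · exact val_mul_mul_sub_eq hπ hA.val_zero_zero_eq_one hB.val_one_one_eq_one (small 0 1)
  · exact val_mul_mul_sub_lt hπ
      (Right.mul_lt_one_of_le_of_lt (hA.val_le_one 1 0) hB.val_one_zero_lt_one) (small 1 0)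
  · exact val_mul_mul_sub_lt hπ
      (Left.mul_lt_one_of_lt_of_le hA.val_one_zero_lt_one (hB.val_le_one 1 1)) (small 1 1)

theorem eq_lowerUnitriangular_mul_antidiag_mul {x y z w : F} (hπ : π ≠ 0) (hy : y ≠ 0)
    (hdet : x * w - y * z = 1) :
    !![x, y; z, w] = !![1, 0; w / y, 1] * !![0, π; -π⁻¹, 0] * !![π / y, 0; x / π, y / π] := by
  ext i j
  rw [mul_antidiag_mul_apply]
  fin_cases i <;> fin_cases j <;> simp <;> field_simp
  linear_combination -hdet

end

/-- Let `g = [[x, y], [z, w]] ∈ SL₂(F)` and `v(π) > 1`.  Then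
`g ∈ I · [[0, π], [−π⁻¹, 0]] · I` iff `v(x) < v(π)`, `v(y) = v(π)`, `v(z) < v(π)` and
`v(w) < v(π)`. -/
theorem mem_iwahori_double_coset_antidiag_iff
    {F Γ₀ : Type*} [Field F] [LinearOrderedCommGroupWithZero Γ₀]
    (v : Valuation F Γ₀) (π : F) (hπ : 1 < v π)
    (x y z w : F) (hdet : x * w - y * z = 1) :
    (∃ i₁ i₂ : Matrix (Fin 2) (Fin 2) F, IwahoriMem v i₁ ∧ IwahoriMem v i₂ ∧
        !![x, y; z, w] = i₁ * !![0, π; -π⁻¹, 0] * i₂) ↔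
      v x < v π ∧ v y = v π ∧ v z < v π ∧ v w < v π := by
  have hπ0 : 0 < v π := zero_lt_one.trans hπ
  constructor
  · rintro ⟨A, B, hA, hB, hg⟩
    have hM := val_mul_antidiag_mul hπ hA hB
    rw [← hg] at hM
    exact hM
  · rintro ⟨hx, hy, -, hw⟩
    have hy0 : y ≠ 0 := fun h => by simp [h, hπ0.ne] at hy
    have hπne : π ≠ 0 := v.ne_zero_iff.mp hπ0.ne'
    have hπy : v (π / y) = 1 := by rw [map_div₀, hy, div_self hπ0.ne']
    have hyπ : v (y / π) = 1 := by rw [map_div₀, hy, div_self hπ0.ne']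
    refine ⟨_, _, iwahoriMem_lowerTriangular (one_mul 1) v.map_one.le ?_ v.map_one.le,
      iwahoriMem_lowerTriangular (by field_simp) hπy.le ?_ hyπ.le,
      eq_lowerUnitriangular_mul_antidiag_mul hπne hy0 hdet⟩
    · rwa [map_div₀, hy, div_lt_one₀ hπ0]
    · rwa [map_div₀, div_lt_one₀ hπ0]
end
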